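/- Let P, P' be orthogonal projections on a Hilbert space H. If P - P' is trace class, then the operator P'P|_{ran P} : ran P → ran P' is Fredholm. -/

import Mathlib

open scoped InnerProductSpace NNReal

/-- Trace class (nuclear) operators. -/
def IsTraceClass {H : Type*} [NormedAddCommGroup H] [InnerProductSpace ℂ H]
    (T : H →L[ℂ] H) : Prop :=
  ∃ (f g : ℕ → H), Summable (fun n => ‖f n‖ * ‖g n‖) ∧
    ∀ x, T x = ∑' n, ⟪f n, x⟫_ℂ • g n

/-- A bounded operator is Fredholm if it has finite-dimensional kernel and
cokernel and closed range. -/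
def IsFredholm {E F : Type*} [NormedAddCommGroup E] [NormedSpace ℂ E]
    [NormedAddCommGroup F] [NormedSpace ℂ F] (T : E →L[ℂ] F) : Prop :=
  FiniteDimensional ℂ (LinearMap.ker (T : E →ₗ[ℂ] F)) ∧
    FiniteDimensional ℂ (F ⧸ LinearMap.range (T : E →ₗ[ℂ] F)) ∧
    IsClosed (LinearMap.range (T : E →ₗ[ℂ] F) : Set F)

section Aux

variable {H : Type*} [NormedAddCommGroup H] [InnerProductSpace ℂ H]

/-- Rank-one operators are compact. -/
lemma isCompactOperator_rankOne (f g : H) :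
    IsCompactOperator (fun x : H => ⟪f, x⟫_ℂ • g) := by
  refine ⟨(fun c : ℂ => c • g) '' Metric.closedBall 0 ‖f‖,
    (isCompact_closedBall 0 ‖f‖).image (continuous_id.smul continuous_const), ?_⟩
  refine Filter.mem_of_superset (Metric.closedBall_mem_nhds (0 : H) one_pos) ?_
  intro x hx
  refine ⟨⟪f, x⟫_ℂ, ?_, rfl⟩
  rw [Metric.mem_closedBall, dist_zero_right]
  calc ‖⟪f, x⟫_ℂ‖ ≤ ‖f‖ * ‖x‖ := norm_inner_le_norm _ _
    _ ≤ ‖f‖ * 1 := by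
        have hx1 : ‖x‖ ≤ 1 := by simpa [dist_zero_right] using hx
        exact mul_le_mul_of_nonneg_left hx1 (norm_nonneg f)
    _ = ‖f‖ := mul_one _

/-- Trace class operators are compact. -/
lemma IsTraceClass.isCompactOperator [CompleteSpace H] {T : H →L[ℂ] H}
    (h : IsTraceClass T) : IsCompactOperator ⇑T := by
  obtain ⟨f, g, hsum, hrep⟩ := h
  set A : ℕ → (H →L[ℂ] H) :=
    fun n => ∑ i ∈ Finset.range n, (innerSL ℂ (f i)).smulRight (g i) with hA
  have hAapp : ∀ n x, A n x = ∑ i ∈ Finset.range n, ⟪f i, x⟫_ℂ • g i := by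
    intro n x
    simp [hA]
  have hAc : ∀ n, IsCompactOperator ⇑(A n) := by
    intro n
    induction n with
    | zero =>
      have : ⇑(A 0) = fun _ : H => (0 : H) := by
        funext x; simp [hAapp]
      rw [this]
      exact isCompactOperator_zero
    | succ n ih =>
      have : ⇑(A (n + 1)) = fun x => A n x + ⟪f n, x⟫_ℂ • g n := by
        funext x; simp [hAapp, Finset.sum_range_succ]
      rw [this]
      exact ih.add (isCompactOperator_rankOne (f n) (g n))
  -- summability of the series defining T
  have hbnd : ∀ (x : H) (i : ℕ), ‖⟪f i, x⟫_ℂ • g i‖ ≤ (‖f i‖ * ‖g i‖) * ‖x‖ := by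
    intro x i
    rw [norm_smul]
    calc ‖⟪f i, x⟫_ℂ‖ * ‖g i‖ ≤ (‖f i‖ * ‖x‖) * ‖g i‖ := by
          exact mul_le_mul_of_nonneg_right (norm_inner_le_norm _ _) (norm_nonneg _)
      _ = (‖f i‖ * ‖g i‖) * ‖x‖ := by ring
  have hsx : ∀ x : H, Summable fun i => ⟪f i, x⟫_ℂ • g i := by
    intro x
    refine Summable.of_norm ?_
    exact Summable.of_nonneg_of_le (fun i => norm_nonneg _) (hbnd x) (hsum.mul_right ‖x‖)
  have htails : ∀ n : ℕ, Summable fun i => ‖f (i + n)‖ * ‖g (i + n)‖ :=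
    fun n => (summable_nat_add_iff n).2 hsum
  -- operator norm bound on the tails
  have hopbnd : ∀ n, ‖A n - T‖ ≤ ∑' i, ‖f (i + n)‖ * ‖g (i + n)‖ := by
    intro n
    refine ContinuousLinearMap.opNorm_le_bound _ (tsum_nonneg fun i =>
      mul_nonneg (norm_nonneg _) (norm_nonneg _)) ?_
    intro x
    have hdiff : T x - A n x = ∑' i, ⟪f (i + n), x⟫_ℂ • g (i + n) := by
      have := Summable.sum_add_tsum_nat_add (f := fun i => ⟪f i, x⟫_ℂ • g i) n (hsx x)
      rw [hrep x, hAapp, ← this]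
      abel
    have : ‖T x - A n x‖ ≤ (∑' i, ‖f (i + n)‖ * ‖g (i + n)‖) * ‖x‖ := by
      rw [hdiff]
      calc ‖∑' i, ⟪f (i + n), x⟫_ℂ • g (i + n)‖
          ≤ ∑' i, ‖⟪f (i + n), x⟫_ℂ • g (i + n)‖ := by
            refine norm_tsum_le_tsum_norm ?_
            exact Summable.of_nonneg_of_le (fun i => norm_nonneg _)
              (fun i => hbnd x (i + n)) ((htails n).mul_right ‖x‖)
        _ ≤ ∑' i, (‖f (i + n)‖ * ‖g (i + n)‖) * ‖x‖ := by
            refine Summable.tsum_le_tsum (fun i => hbnd x (i + n)) ?_ ((htails n).mul_right ‖x‖)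
            exact Summable.of_nonneg_of_le (fun i => norm_nonneg _)
              (fun i => hbnd x (i + n)) ((htails n).mul_right ‖x‖)
        _ = (∑' i, ‖f (i + n)‖ * ‖g (i + n)‖) * ‖x‖ := tsum_mul_right
    calc ‖(A n - T) x‖ = ‖T x - A n x‖ := by
          rw [ContinuousLinearMap.sub_apply, norm_sub_rev]
      _ ≤ (∑' i, ‖f (i + n)‖ * ‖g (i + n)‖) * ‖x‖ := this
  have htendsto : Filter.Tendsto A Filter.atTop (nhds T) := by
    rw [tendsto_iff_norm_sub_tendsto_zero]
    refine squeeze_zero (fun n => norm_nonneg _) hopbnd ?_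
    exact tendsto_sum_nat_add fun i => ‖f i‖ * ‖g i‖
  exact isCompactOperator_of_tendsto htendsto (Filter.Eventually.of_forall hAc)

/-- Riesz: a submodule on which a compact operator acts as the identity is
finite-dimensional. -/
lemma finiteDimensional_of_fixed {E : Type*} [NormedAddCommGroup E] [NormedSpace ℂ E]
    (K : E →L[ℂ] E) (hK : IsCompactOperator ⇑K) (V : Submodule ℂ E)
    (hV : ∀ x ∈ V, K x = x) : FiniteDimensional ℂ V := by
  set W := V.topologicalClosure with hW
  have hWclosed : IsClosed (W : Set E) := V.isClosed_topologicalClosure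
  have hWfix : ∀ x ∈ W, K x = x := by
    have hcl : IsClosed {x : E | K x = x} := isClosed_eq K.continuous continuous_id
    intro x hx
    have hsub : (V : Set E) ⊆ {x : E | K x = x} := fun y hy => hV y hy
    have : (W : Set E) ⊆ {x : E | K x = x} := by
      rw [hW, Submodule.topologicalClosure_coe]
      exact closure_minimal hsub hcl
    exact this hx
  obtain ⟨C, hCcomp, hCsub⟩ := hK.image_closedBall_subset_compact (𝕜₁ := ℂ)
    (f := (K : E →ₗ[ℂ] E)) 1
  have hball : IsCompact (Metric.closedBall (0 : W) 1) := by
    rw [Subtype.isCompact_iff]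
    have himg : (Subtype.val '' Metric.closedBall (0 : W) 1)
        = (W : Set E) ∩ Metric.closedBall 0 1 := by
      ext x
      constructor
      · rintro ⟨⟨y, hyW⟩, hyb, rfl⟩
        refine ⟨hyW, ?_⟩
        simpa [Metric.mem_closedBall, dist_zero_right] using hyb
      · rintro ⟨hxW, hxb⟩
        refine ⟨⟨x, hxW⟩, ?_, rfl⟩
        simpa [Metric.mem_closedBall, dist_zero_right] using hxb
    rw [himg]
    refine IsCompact.of_isClosed_subset hCcomp (hWclosed.inter Metric.isClosed_closedBall) ?_
    rintro x ⟨hxW, hxb⟩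
    have : K x ∈ C := hCsub ⟨x, hxb, rfl⟩
    rwa [hWfix x hxW] at this
  have : FiniteDimensional ℂ W := FiniteDimensional.of_isCompact_closedBall₀ ℂ one_pos hball
  exact Submodule.finiteDimensional_of_le V.le_topologicalClosure

/-- The key algebraic identity for the parametrix. -/
lemma key_calc (P P' : H →L[ℂ] H) (hP : P * P = P) (hP' : P' * P' = P')
    (x : H) (hx : P x = x) :
    P (P' x) = x - P ((P - P') ((P - P') x)) := by
  have hPP : ∀ y, P (P y) = P y := fun y => by
    rw [← ContinuousLinearMap.mul_apply, hP]
  have hP'P' : ∀ y, P' (P' y) = P' y := fun y => by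
    rw [← ContinuousLinearMap.mul_apply, hP']
  simp only [ContinuousLinearMap.sub_apply, map_sub, hx, hPP, hP'P']
  abel

end Aux

set_option maxHeartbeats 1000000

/-- for orthogonal projections `P, P'` with `P - P'` trace class,
the operator `P'P : ran P → ran P'` is Fredholm. -/
theorem proj_comp_proj_fredholm
    {H : Type*} [NormedAddCommGroup H] [InnerProductSpace ℂ H] [CompleteSpace H]
    (P P' : H →L[ℂ] H)
    (hP : P * P = P) (hPsa : IsSelfAdjoint P)
    (hP' : P' * P' = P') (hP'sa : IsSelfAdjoint P')
    (hTC : IsTraceClass (P - P')) :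
    IsFredholm
      (ContinuousLinearMap.codRestrict
        (P'.comp (LinearMap.range (P : H →ₗ[ℂ] H)).subtypeL) (LinearMap.range (P' : H →ₗ[ℂ] H))
        (fun x => LinearMap.mem_range_self (P' : H →ₗ[ℂ] H) _)) := by
  classical
  have hPP : ∀ y, P (P y) = P y := fun y => by
    rw [← ContinuousLinearMap.mul_apply, hP]
  have hP'P' : ∀ y, P' (P' y) = P' y := fun y => by
    rw [← ContinuousLinearMap.mul_apply, hP']
  have hPsym : ∀ x y, ⟪P x, y⟫_ℂ = ⟪x, P y⟫_ℂ :=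
    ContinuousLinearMap.isSelfAdjoint_iff_isSymmetric.mp hPsa
  have hP'sym : ∀ x y, ⟪P' x, y⟫_ℂ = ⟪x, P' y⟫_ℂ :=
    ContinuousLinearMap.isSelfAdjoint_iff_isSymmetric.mp hP'sa
  -- the ranges are closed
  have hrangeP : (LinearMap.range (P : H →ₗ[ℂ] H) : Set H) = {x | P x = x} := by
    ext x
    constructor
    · rintro ⟨y, rfl⟩; exact hPP y
    · intro hx; exact ⟨x, hx⟩
  have hrangeP' : (LinearMap.range (P' : H →ₗ[ℂ] H) : Set H) = {x | P' x = x} := by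
    ext x
    constructor
    · rintro ⟨y, rfl⟩; exact hP'P' y
    · intro hx; exact ⟨x, hx⟩
  have hEc : IsClosed (LinearMap.range (P : H →ₗ[ℂ] H) : Set H) := by
    rw [hrangeP]; exact isClosed_eq P.continuous continuous_id
  have hFc : IsClosed (LinearMap.range (P' : H →ₗ[ℂ] H) : Set H) := by
    rw [hrangeP']; exact isClosed_eq P'.continuous continuous_id
  haveI : CompleteSpace (LinearMap.range (P : H →ₗ[ℂ] H)) := hEc.completeSpace_coe
  haveI : CompleteSpace (LinearMap.range (P' : H →ₗ[ℂ] H)) := hFc.completeSpace_coe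
  set E := LinearMap.range (P : H →ₗ[ℂ] H) with hEdef
  set F := LinearMap.range (P' : H →ₗ[ℂ] H) with hFdef
  have hmemE : ∀ x : H, P x ∈ E := fun x => LinearMap.mem_range_self _ _
  have hmemF : ∀ x : H, P' x ∈ F := fun x => LinearMap.mem_range_self _ _
  have hfixE : ∀ x : H, x ∈ E → P x = x := by
    intro x hx
    have : x ∈ {x | P x = x} := by rw [← hrangeP]; exact hx
    exact this
  have hfixF : ∀ x : H, x ∈ F → P' x = x := by
    intro x hx
    have : x ∈ {x | P' x = x} := by rw [← hrangeP']; exact hx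
    exact this
  set T : E →L[ℂ] F :=
    ContinuousLinearMap.codRestrict (P'.comp E.subtypeL) F
      (fun x => LinearMap.mem_range_self _ _) with hTdef
  set S : F →L[ℂ] E :=
    ContinuousLinearMap.codRestrict (P.comp F.subtypeL) E
      (fun x => LinearMap.mem_range_self _ _) with hSdef
  set KE : E →L[ℂ] E :=
    ContinuousLinearMap.codRestrict
      ((P.comp ((P - P').comp (P - P'))).comp E.subtypeL) E
      (fun x => LinearMap.mem_range_self _ _) with hKEdef
  set KF : F →L[ℂ] F :=
    ContinuousLinearMap.codRestrict
      ((P'.comp ((P - P').comp (P - P'))).comp F.subtypeL) F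
      (fun x => LinearMap.mem_range_self _ _) with hKFdef
  have hTval : ∀ x : E, (T x : H) = P' x := fun x => rfl
  have hSval : ∀ y : F, (S y : H) = P y := fun y => rfl
  have hKEval : ∀ x : E, (KE x : H) = P ((P - P') ((P - P') x)) := fun x => rfl
  have hKFval : ∀ y : F, (KF y : H) = P' ((P - P') ((P - P') y)) := fun y => rfl
  -- parametrix identities
  have hST : ∀ x : E, S (T x) = x - KE x := by
    intro x
    apply Subtype.ext
    have hx : P (x : H) = x := hfixE _ x.2
    calc (S (T x) : H) = P (P' (x : H)) := rfl
      _ = (x : H) - P ((P - P') ((P - P') (x : H))) := key_calc P P' hP hP' _ hx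
      _ = ((x - KE x : E) : H) := by rw [Submodule.coe_sub, hKEval]
  have hTS : ∀ y : F, T (S y) = y - KF y := by
    intro y
    apply Subtype.ext
    have hy : P' (y : H) = y := hfixF _ y.2
    have hsq : ∀ z : H, (P' - P) ((P' - P) z) = (P - P') ((P - P') z) := by
      intro z
      simp only [ContinuousLinearMap.sub_apply, map_sub]
      abel
    calc (T (S y) : H) = P' (P (y : H)) := rfl
      _ = (y : H) - P' ((P' - P) ((P' - P) (y : H))) := key_calc P' P hP' hP _ hy
      _ = (y : H) - P' ((P - P') ((P - P') (y : H))) := by rw [hsq]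
      _ = ((y - KF y : F) : H) := by rw [Submodule.coe_sub, hKFval]
  -- compactness of the error terms
  have hDc : IsCompactOperator ⇑(P - P') := hTC.isCompactOperator
  have hKEc : IsCompactOperator ⇑KE := by
    have h1 : IsCompactOperator (⇑(P - P') ∘ ⇑E.subtypeL) := hDc.comp_clm E.subtypeL
    have h2 : IsCompactOperator (⇑(P.comp (P - P')) ∘ (⇑(P - P') ∘ ⇑E.subtypeL)) :=
      h1.clm_comp (P.comp (P - P'))
    have h3 : IsCompactOperator ⇑((P.comp ((P - P').comp (P - P'))).comp E.subtypeL) := by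
      convert h2 using 1
      rfl
    exact h3.codRestrict (fun x => LinearMap.mem_range_self (P : H →ₗ[ℂ] H) _) hEc
  have hKFc : IsCompactOperator ⇑KF := by
    have h1 : IsCompactOperator (⇑(P - P') ∘ ⇑F.subtypeL) := hDc.comp_clm F.subtypeL
    have h2 : IsCompactOperator (⇑(P'.comp (P - P')) ∘ (⇑(P - P') ∘ ⇑F.subtypeL)) :=
      h1.clm_comp (P'.comp (P - P'))
    have h3 : IsCompactOperator ⇑((P'.comp ((P - P').comp (P - P'))).comp F.subtypeL) := by
      convert h2 using 1
      rfl
    exact h3.codRestrict (fun x => LinearMap.mem_range_self (P' : H →ₗ[ℂ] H) _) hFc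
  -- finite-dimensional kernel
  have hker : FiniteDimensional ℂ (LinearMap.ker (T : E →ₗ[ℂ] F)) := by
    refine finiteDimensional_of_fixed KE hKEc (LinearMap.ker (T : E →ₗ[ℂ] F)) ?_
    intro x hx
    have hx0 : T x = 0 := hx
    have h0 : S (T x) = x - KE x := hST x
    rw [hx0, map_zero] at h0
    exact (sub_eq_zero.mp h0.symm).symm
  haveI : CompleteSpace (LinearMap.ker (T : E →ₗ[ℂ] F)) := FiniteDimensional.complete ℂ _
  set M : Submodule ℂ E := (LinearMap.ker (T : E →ₗ[ℂ] F))ᗮ with hMdef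
  have hcompl : IsCompl (LinearMap.ker (T : E →ₗ[ℂ] F)) M :=
    Submodule.isCompl_orthogonal_of_hasOrthogonalProjection
  have hMclosed : IsClosed (M : Set E) := Submodule.isClosed_orthogonal _
  -- T is bounded below on M
  have hbdd : ∃ c : ℝ, 0 < c ∧ ∀ x : E, x ∈ M → c * ‖x‖ ≤ ‖T x‖ := by
    by_contra hcon
    push_neg at hcon
    have hseq : ∀ n : ℕ, ∃ x : E, x ∈ M ∧ ‖x‖ = 1 ∧ ‖T x‖ < 1 / (n + 1) := by
      intro n
      obtain ⟨x, hxM, hxlt⟩ := hcon (1 / (n + 1)) (by positivity)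
      have hx0 : x ≠ 0 := by
        rintro rfl
        simp at hxlt
      have hnx : ‖x‖ ≠ 0 := norm_ne_zero_iff.mpr hx0
      refine ⟨((‖x‖ : ℂ))⁻¹ • x, M.smul_mem _ hxM, ?_, ?_⟩
      · rw [norm_smul, norm_inv, Complex.norm_real, Real.norm_eq_abs,
          abs_of_nonneg (norm_nonneg x), inv_mul_cancel₀ hnx]
      · rw [map_smul, norm_smul, norm_inv, Complex.norm_real, Real.norm_eq_abs,
          abs_of_nonneg (norm_nonneg x)]
        rw [inv_mul_lt_iff₀ (lt_of_le_of_ne (norm_nonneg x) (Ne.symm hnx)), mul_comm]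
        exact hxlt
    choose u huM hu1 huT using hseq
    have hTu : Filter.Tendsto (fun n => T (u n)) Filter.atTop (nhds 0) := by
      refine squeeze_zero_norm (fun n => le_of_lt (huT n)) ?_
      exact tendsto_one_div_add_atTop_nhds_zero_nat
    -- the images K (u n) lie in a fixed compact set
    obtain ⟨C, hCcomp, hCmem⟩ := hKEc
    obtain ⟨δ, hδpos, hδsub⟩ := Metric.mem_nhds_iff.mp hCmem
    set C' : Set E := (fun y : E => ((2 / δ : ℝ) : ℂ) • y) '' C with hC'
    have hC'comp : IsCompact C' := hCcomp.image (continuous_const_smul _)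
    have hmemC' : ∀ n, KE (u n) ∈ C' := by
      intro n
      have hδne : (δ : ℝ) ≠ 0 := ne_of_gt hδpos
      have hmemball : ((δ / 2 : ℝ) : ℂ) • u n ∈ Metric.ball (0 : E) δ := by
        rw [Metric.mem_ball, dist_zero_right, norm_smul, Complex.norm_real,
          Real.norm_eq_abs, abs_of_pos (by positivity), hu1 n, mul_one]
        linarith
      have hmemC : KE (((δ / 2 : ℝ) : ℂ) • u n) ∈ C := hδsub hmemball
      refine ⟨KE (((δ / 2 : ℝ) : ℂ) • u n), hmemC, ?_⟩
      simp only [map_smul, smul_smul, ← Complex.ofReal_mul]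
      rw [show (2 / δ) * (δ / 2) = 1 by field_simp, Complex.ofReal_one, one_smul]
    obtain ⟨y, hyC', φ, hφmono, hφtendsto⟩ := hC'comp.tendsto_subseq hmemC'
    have h2 : Filter.Tendsto (fun n => S (T (u (φ n)))) Filter.atTop (nhds 0) := by
      have := (S.continuous.tendsto 0).comp (hTu.comp hφmono.tendsto_atTop)
      simpa [Function.comp_def] using this
    have hu_lim : Filter.Tendsto (fun n => u (φ n)) Filter.atTop (nhds (y + 0)) := by
      have heq : (fun n => u (φ n)) = fun n => KE (u (φ n)) + S (T (u (φ n))) := by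
        funext n
        rw [hST (u (φ n))]
        abel
      rw [heq]
      exact hφtendsto.add h2
    rw [add_zero] at hu_lim
    have hynorm : ‖y‖ = 1 := by
      have h3 : Filter.Tendsto (fun n => ‖u (φ n)‖) Filter.atTop (nhds ‖y‖) :=
        (continuous_norm.tendsto y).comp hu_lim
      have h4 : Filter.Tendsto (fun n => ‖u (φ n)‖) Filter.atTop (nhds 1) := by
        simpa [hu1] using tendsto_const_nhds (α := ℝ) (x := 1) (f := Filter.atTop (α := ℕ))
      exact tendsto_nhds_unique h3 h4
    have hyM : y ∈ M := hMclosed.mem_of_tendsto hu_lim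
      (Filter.Eventually.of_forall fun n => huM (φ n))
    have hyker : y ∈ LinearMap.ker (T : E →ₗ[ℂ] F) := by
      have h5 : Filter.Tendsto (fun n => T (u (φ n))) Filter.atTop (nhds (T y)) :=
        (T.continuous.tendsto y).comp hu_lim
      have h6 : Filter.Tendsto (fun n => T (u (φ n))) Filter.atTop (nhds 0) :=
        hTu.comp hφmono.tendsto_atTop
      have : T y = 0 := tendsto_nhds_unique h5 h6
      exact this
    have hy0 : y = 0 := by
      have := (Submodule.mem_orthogonal _ y).mp hyM y hyker
      exact inner_self_eq_zero.mp this
    rw [hy0, norm_zero] at hynorm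
    norm_num at hynorm
  obtain ⟨c, hcpos, hcbnd⟩ := hbdd
  -- closed range
  haveI : CompleteSpace M := hMclosed.completeSpace_coe
  have hrange_eq : (LinearMap.range (T : E →ₗ[ℂ] F) : Set F) = Set.range ⇑(T.comp M.subtypeL) := by
    ext z
    constructor
    · rintro ⟨x, rfl⟩
      have hxtop : x ∈ LinearMap.ker (T : E →ₗ[ℂ] F) ⊔ M := by
        rw [hcompl.sup_eq_top]; exact Submodule.mem_top
      obtain ⟨k, hk, m, hm, rfl⟩ := Submodule.mem_sup.mp hxtop
      refine ⟨⟨m, hm⟩, ?_⟩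
      have hk0 : T k = 0 := hk
      simp [ContinuousLinearMap.comp_apply, map_add, hk0]
    · rintro ⟨m, rfl⟩
      exact ⟨M.subtypeL m, rfl⟩
  have hclosed_range : IsClosed (LinearMap.range (T : E →ₗ[ℂ] F) : Set F) := by
    rw [hrange_eq]
    have hanti : AntilipschitzWith (c.toNNReal)⁻¹ ⇑(T.comp M.subtypeL) := by
      refine ContinuousLinearMap.antilipschitz_of_bound _ ?_
      intro m
      have h1 : c * ‖(m : E)‖ ≤ ‖T (m : E)‖ := hcbnd (m : E) m.2
      have h2 : ‖(T.comp M.subtypeL) m‖ = ‖T (m : E)‖ := rfl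
      rw [h2]
      have hcoe : ((c.toNNReal⁻¹ : ℝ≥0) : ℝ) = c⁻¹ := by
        rw [NNReal.coe_inv, Real.coe_toNNReal _ (le_of_lt hcpos)]
      have h3 : ‖(m : E)‖ ≤ c⁻¹ * ‖T (m : E)‖ := by
        rw [inv_mul_eq_div, le_div_iff₀ hcpos, mul_comm]
        exact h1
      calc ‖m‖ = ‖(m : E)‖ := rfl
        _ ≤ c⁻¹ * ‖T (m : E)‖ := h3
        _ = ((c.toNNReal⁻¹ : ℝ≥0) : ℝ) * ‖T (m : E)‖ := by rw [hcoe]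
    exact hanti.isClosed_range (T.comp M.subtypeL).uniformContinuous
  -- finite-dimensional cokernel
  haveI : CompleteSpace (LinearMap.range (T : E →ₗ[ℂ] F)) := hclosed_range.completeSpace_coe
  have hcomplR : IsCompl (LinearMap.range (T : E →ₗ[ℂ] F)) (LinearMap.range (T : E →ₗ[ℂ] F))ᗮ :=
    Submodule.isCompl_orthogonal_of_hasOrthogonalProjection
  have hfinR : FiniteDimensional ℂ ((LinearMap.range (T : E →ₗ[ℂ] F))ᗮ) := by
    refine finiteDimensional_of_fixed KF hKFc _ ?_
    intro y hy
    -- first: ⟪P' (P x), y⟫ = 0 for all x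
    have hy' : ∀ x : H, ⟪P' (P x), (y : H)⟫_ℂ = 0 := by
      intro x
      have hmem : T ⟨P x, hmemE x⟩ ∈ LinearMap.range (T : E →ₗ[ℂ] F) := LinearMap.mem_range_self _ _
      have := (Submodule.mem_orthogonal _ y).mp hy _ hmem
      have hinner : ⟪(T ⟨P x, hmemE x⟩ : H), (y : H)⟫_ℂ = 0 := this
      rwa [hTval] at hinner
    have hyF : P' (y : H) = y := hfixF _ y.2
    -- P y = 0
    have hPy0 : P (y : H) = 0 := by
      have h1 : ⟪P (y : H), (y : H)⟫_ℂ = 0 := by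
        have := hy' (y : H)
        rwa [hP'sym, hyF] at this
      have h2 : ⟪P (y : H), P (y : H)⟫_ℂ = 0 := by
        have h4 := hPsym (P (y : H)) (y : H)
        rw [hPP] at h4
        rw [← h4]
        exact h1
      exact inner_self_eq_zero.mp h2
    -- hence K_F y = y
    apply Subtype.ext
    rw [hKFval]
    simp only [ContinuousLinearMap.sub_apply, map_sub, hPy0, hyF, hP'P']
    simp only [map_zero, map_sub, hPy0, hyF, hP'P']
    abel
  have hquot : FiniteDimensional ℂ (F ⧸ LinearMap.range (T : E →ₗ[ℂ] F)) := by
    have e := Submodule.quotientEquivOfIsCompl (LinearMap.range (T : E →ₗ[ℂ] F))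
      ((LinearMap.range (T : E →ₗ[ℂ] F))ᗮ) hcomplR
    exact LinearEquiv.finiteDimensional e.symm
  exact ⟨hker, hquot, hclosed_range⟩
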